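/- Let G be a non-trivial group, let 𝒞 be a joinable compression family for G, and let H be a normal subgroup of G that is semi-transitive on 𝒞. Then for every A ∈ 𝒞 there exists B ∈ 𝒞 such that A ≤ B and D(A) ≤ D(B ∩ H). Consequently, for every A ∈ 𝒞 the subgroup A ∩ H is non-abelian. -/

import Mathlib

/-!
By (B) some `P, Q ∈ 𝒞` commute. Some member of `𝒞` contains a commuting pair: otherwise, by
joinability, any two partners of a member are nested, which makes `𝒞` an antichain, then
`𝒞 = {P, Q}`, and conjugation by a nontrivial element of `P` fixes every member, against (B).
Conjugating that member strictly inside itself and joining once more gives a member `B`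
containing three pairwise commuting members; by semi-transitivity of `H` they may be taken to be
`A, tAt⁻¹, sAs⁻¹` with `t, s ∈ H`. For `a, b ∈ A` the commutators `⁅a, t⁆, ⁅b, s⁆` then lie in
`B ⊓ H` and `⁅⁅a, t⁆, ⁅b, s⁆⁆ = ⁅a, b⁆`. Finally, conjugating `B` into `A` by an element of `H`
carries `D(B ⊓ H) ≠ 1` into `D(A ⊓ H)`.
-/

namespace Paper

variable {G : Type*} [Group G]

/-- Conjugate of a subgroup: `g A g⁻¹`. -/
def conjS (g : G) (A : Subgroup G) : Subgroup G := A.map (MulAut.conj g).toMonoidHom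

/-- The family is invariant under conjugation in `G`. -/
def ConjInvariant (C : Set (Subgroup G)) : Prop := ∀ (g : G), ∀ A ∈ C, conjS g A ∈ C

/-- Condition (A): every member of the family is non-abelian. -/
def CondA (C : Set (Subgroup G)) : Prop :=
  ∀ A ∈ C, ∃ a ∈ A, ∃ b ∈ A, a * b ≠ b * a

/-- Condition (B): for every nontrivial element `g` of `H` there is a member `A` of the
family with `[A, gAg⁻¹] = 1`. -/
def CondB (C : Set (Subgroup G)) (H : Subgroup G) : Prop :=
  ∀ g ∈ H, g ≠ 1 → ∃ A ∈ C, ⁅A, conjS g A⁆ = (⊥ : Subgroup G)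

/-- Condition (C): `H` is semi-transitive on the family. -/
def CondC (C : Set (Subgroup G)) (H : Subgroup G) : Prop :=
  ∀ A ∈ C, ∀ B ∈ C, ∃ g ∈ H, conjS g A ≤ B

/-- Condition (D): the family is joinable. -/
def CondD (C : Set (Subgroup G)) : Prop :=
  ∀ A ∈ C, ∀ B ∈ C, ∀ C' ∈ C, ⁅A, C'⁆ = (⊥ : Subgroup G) → ¬ C' ≤ B →
    ∃ D ∈ C, A ⊔ B ≤ D

/-- Condition (E): the family is shiftable over `H`: for each `A` in the family there is
`g ∈ H` and a homomorphism from the unrestricted direct product `∏_{i ≥ 1} A` into `H`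
restricting to the identity on the first factor, which `g` conjugates by the shift. -/
def CondE (C : Set (Subgroup G)) (H : Subgroup G) : Prop :=
  ∀ A ∈ C, ∃ g ∈ H, ∃ φ : (ℕ → A) →* G,
    (∀ f : ℕ → A, φ f ∈ H) ∧
    (∀ a : A, φ (fun i => if i = 0 then a else 1) = (a : G)) ∧
    (∀ f : ℕ → A, g * φ f * g⁻¹ = φ (fun i => match i with | 0 => 1 | (n+1) => f n))

/-- Conditions (A)–(C): a compression family for `H`. -/
def IsCompressionFamily (C : Set (Subgroup G)) (H : Subgroup G) : Prop :=
  ConjInvariant C ∧ CondA C ∧ CondB C H ∧ CondC C H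

/-- Conditions (A)–(D): a joinable compression family for `H`. -/
def IsJoinableCompressionFamily (C : Set (Subgroup G)) (H : Subgroup G) : Prop :=
  IsCompressionFamily C H ∧ CondD C

/-- Conditions (A)–(E): a shift-joinable compression family for `H`. -/
def IsShiftJoinableCompressionFamily (C : Set (Subgroup G)) (H : Subgroup G) : Prop :=
  IsJoinableCompressionFamily C H ∧ CondE C H

open scoped Pointwise commutatorElement

lemma conjS_eq_smul (g : G) (A : Subgroup G) : conjS g A = MulAut.conj g • A := rfl

lemma conj_mem_conjS (g : G) {a : G} {A : Subgroup G} (ha : a ∈ A) : g * a * g⁻¹ ∈ conjS g A :=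
  Subgroup.smul_mem_pointwise_smul a (MulAut.conj g) A ha

lemma conjS_le_conjS_iff {g : G} {A B : Subgroup G} : conjS g A ≤ conjS g B ↔ A ≤ B :=
  Subgroup.pointwise_smul_le_pointwise_smul_iff (a := MulAut.conj g)

lemma conjS_le_iff {g : G} {A B : Subgroup G} : conjS g A ≤ B ↔ A ≤ conjS g⁻¹ B := by
  rw [conjS_eq_smul, conjS_eq_smul, map_inv]
  exact Subgroup.pointwise_smul_subset_iff

lemma conjS_eq_self_of_mem {g : G} {A : Subgroup G} (hg : g ∈ A) : conjS g A = A :=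
  Subgroup.conj_smul_eq_self_of_mem hg

lemma conjS_eq_self_of_normal (g : G) {H : Subgroup G} (hH : H.Normal) : conjS g H = H :=
  hH.conjAct (ConjAct.toConjAct g)

lemma conjS_inf (g : G) (A B : Subgroup G) : conjS g (A ⊓ B) = conjS g A ⊓ conjS g B :=
  Subgroup.smul_inf (MulAut.conj g) A B

lemma commutator_conjS (g : G) (A B : Subgroup G) :
    ⁅conjS g A, conjS g B⁆ = conjS g ⁅A, B⁆ :=
  (Subgroup.map_commutator A B _).symm

lemma conjS_eq_bot_iff {g : G} {A : Subgroup G} : conjS g A = ⊥ ↔ A = ⊥ :=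
  Subgroup.map_eq_bot_iff_of_injective A (MulAut.conj g).injective

section Commuting

variable {A B A' B' : Subgroup G}

lemma commute_of_commutator_eq_bot (h : ⁅A, B⁆ = ⊥) {a b : G} (ha : a ∈ A) (hb : b ∈ B) :
    Commute a b :=
  commutatorElement_eq_one_iff_commute.mp
    (Subgroup.mem_bot.mp (h ▸ Subgroup.commutator_mem_commutator ha hb))

lemma commutator_eq_bot_of_le (h : ⁅A, B⁆ = ⊥) (hA : A' ≤ A) (hB : B' ≤ B) : ⁅A', B'⁆ = ⊥ :=
  le_bot_iff.mp (h ▸ Subgroup.commutator_mono hA hB)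

lemma commutator_conjS_eq_bot (g : G) (h : ⁅A, B⁆ = ⊥) : ⁅conjS g A, conjS g B⁆ = ⊥ := by
  rw [commutator_conjS, h, conjS_eq_bot_iff]

lemma commutator_self_ne_bot_iff {K : Subgroup G} :
    ⁅K, K⁆ ≠ ⊥ ↔ ∃ a ∈ K, ∃ b ∈ K, a * b ≠ b * a := by
  simp only [Ne, Subgroup.commutator_eq_bot_iff_le_centralizer, SetLike.le_def,
    Subgroup.mem_centralizer_iff, not_forall, exists_prop]
  exact ⟨fun ⟨a, ha, b, hb, h⟩ => ⟨b, hb, a, ha, h⟩, fun ⟨a, ha, b, hb, h⟩ => ⟨b, hb, a, ha, h⟩⟩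

end Commuting

section Family

variable {C : Set (Subgroup G)} {K : Subgroup G}

lemma CondA.not_le_of_commutator_eq_bot (hA : CondA C) {X Y : Subgroup G} (hY : Y ∈ C)
    (hXY : ⁅X, Y⁆ = ⊥) : ¬ Y ≤ X := fun hle =>
  commutator_self_ne_bot_iff.mpr (hA Y hY) (commutator_eq_bot_of_le hXY hle le_rfl)

lemma exists_commuting_pair [Nontrivial G] (hinv : ConjInvariant C) (hB : CondB C ⊤) :
    ∃ P ∈ C, ∃ Q ∈ C, ⁅P, Q⁆ = ⊥ := by
  obtain ⟨g, hg⟩ := exists_ne (1 : G)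
  obtain ⟨P, hP, hPQ⟩ := hB g trivial hg
  exact ⟨P, hP, _, hinv g P hP, hPQ⟩

/-- `Q` is minimal in `C`, since every member below it is a partner of `P`; and every member
contains a conjugate of `Q`. -/
lemma isAntichain_of_partner_le {P Q : Subgroup G} (hP : P ∈ C) (hQ : Q ∈ C) (hPQ : ⁅P, Q⁆ = ⊥)
    (hinv : ConjInvariant C) (hsemi : CondC C K)
    (hle : ∀ X ∈ C, ∀ Y ∈ C, ∀ Z ∈ C, ⁅X, Y⁆ = ⊥ → ⁅X, Z⁆ = ⊥ → Z ≤ Y) :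
    IsAntichain (· ≤ ·) C := by
  have hQ_min : ∀ W ∈ C, W ≤ Q → Q ≤ W := fun W hW hWQ =>
    hle P hP W hW Q hQ (commutator_eq_bot_of_le hPQ le_rfl hWQ) hPQ
  intro W hW Y hY hne hWY
  obtain ⟨u, -, hu⟩ := hsemi Y hY Q hQ
  have hQW := hQ_min _ (hinv u W hW) ((conjS_le_conjS_iff.mpr hWY).trans hu)
  exact hne (le_antisymm hWY (conjS_le_conjS_iff.mp (hu.trans hQW)))

lemma subset_pair_of_isAntichain {P Q : Subgroup G} (hP : P ∈ C) (hQ : Q ∈ C) (hPQ : ⁅P, Q⁆ = ⊥)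
    (hD : CondD C) (hanti : IsAntichain (· ≤ ·) C) :
    C ⊆ {P, Q} := by
  intro B hB
  by_cases hQB : Q ≤ B
  · exact Or.inr (hanti.eq hQ hB hQB).symm
  · obtain ⟨D, hD, hPBD⟩ := hD P hP B hB Q hQ hPQ hQB
    have hPD := hanti.eq hP hD (le_sup_left.trans hPBD)
    exact Or.inl ((hanti.eq hB hD (le_sup_right.trans hPBD)).trans hPD.symm)

lemma not_subset_pair {P Q : Subgroup G} (hP : P ∈ C) (hQ : Q ∈ C) (hPQ : ⁅P, Q⁆ = ⊥)
    (hinv : ConjInvariant C) (hA : CondA C) (hB : CondB C ⊤) :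
    ¬ C ⊆ {P, Q} := by
  intro hCPQ
  obtain ⟨p, hp, p', -, hpp'⟩ := hA P hP
  have hp1 : p ≠ 1 := by rintro rfl; simp at hpp'
  have hPp : conjS p P = P := conjS_eq_self_of_mem hp
  have hQp : conjS p Q = Q := by
    rcases hCPQ (hinv p Q hQ) with h | h
    · refine absurd ?_ (hA.not_le_of_commutator_eq_bot hQ hPQ)
      rw [← conjS_le_conjS_iff (g := p), h, hPp]
    · exact h
  obtain ⟨A, hA₀, hAA⟩ := hB p trivial hp1
  have hAp : conjS p A = A := by rcases hCPQ hA₀ with rfl | rfl <;> assumption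
  rw [hAp] at hAA
  exact hA.not_le_of_commutator_eq_bot hA₀ hAA le_rfl

lemma exists_commuting_pair_le (hinv : ConjInvariant C) (hA : CondA C)
    (hB : CondB C ⊤) (hsemi : CondC C K) (hD : CondD C) {P Q : Subgroup G} (hP : P ∈ C)
    (hQ : Q ∈ C) (hPQ : ⁅P, Q⁆ = ⊥) :
    ∃ D ∈ C, ∃ X ∈ C, ∃ Y ∈ C, X ≤ D ∧ Y ≤ D ∧ ⁅X, Y⁆ = ⊥ := by
  by_contra hno
  refine not_subset_pair hP hQ hPQ hinv hA hB
    (subset_pair_of_isAntichain hP hQ hPQ hD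
      (isAntichain_of_partner_le hP hQ hPQ hinv hsemi fun X hX Y hY Z hZ hXY hXZ => ?_))
  by_contra hZY
  obtain ⟨D, hD, hXYD⟩ := hD X hX Y hY Z hZ hXZ hZY
  exact hno ⟨D, hD, X, hX, Y, hY, le_sup_left.trans hXYD, le_sup_right.trans hXYD, hXY⟩

def IsCommutingTripleIn (B M₁ M₂ M₃ : Subgroup G) : Prop :=
  M₁ ≤ B ∧ M₂ ≤ B ∧ M₃ ≤ B ∧ ⁅M₁, M₂⁆ = ⊥ ∧ ⁅M₁, M₃⁆ = ⊥ ∧ ⁅M₂, M₃⁆ = ⊥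

lemma IsCommutingTripleIn.conjS {B M₁ M₂ M₃ : Subgroup G} (h : IsCommutingTripleIn B M₁ M₂ M₃)
    (g : G) : IsCommutingTripleIn (conjS g B) (conjS g M₁) (conjS g M₂) (conjS g M₃) := by
  obtain ⟨h₁, h₂, h₃, h₁₂, h₁₃, h₂₃⟩ := h
  exact ⟨conjS_le_conjS_iff.mpr h₁, conjS_le_conjS_iff.mpr h₂, conjS_le_conjS_iff.mpr h₃,
    commutator_conjS_eq_bot g h₁₂, commutator_conjS_eq_bot g h₁₃, commutator_conjS_eq_bot g h₂₃⟩

lemma IsCommutingTripleIn.mono {B M₁ M₂ M₃ N₁ N₂ N₃ : Subgroup G}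
    (h : IsCommutingTripleIn B M₁ M₂ M₃) (h₁ : N₁ ≤ M₁) (h₂ : N₂ ≤ M₂) (h₃ : N₃ ≤ M₃) :
    IsCommutingTripleIn B N₁ N₂ N₃ := by
  obtain ⟨hB₁, hB₂, hB₃, h₁₂, h₁₃, h₂₃⟩ := h
  exact ⟨h₁.trans hB₁, h₂.trans hB₂, h₃.trans hB₃, commutator_eq_bot_of_le h₁₂ h₁ h₂,
    commutator_eq_bot_of_le h₁₃ h₁ h₃, commutator_eq_bot_of_le h₂₃ h₂ h₃⟩

/-- Conjugating `D` into `X` gives `D' < D` (strictly, as `Y ≰ X`). The partner `Z` of a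
conjugate `P' ≥ D` of `P` commutes with `D'`, and joinability for `Z`, `D'`, `P' ≰ D'` puts
`Z` and `D'` into one member. -/
lemma exists_isCommutingTripleIn (hinv : ConjInvariant C) (hA : CondA C) (hsemi : CondC C K)
    (hD : CondD C) {P Q : Subgroup G} (hP : P ∈ C) (hQ : Q ∈ C) (hPQ : ⁅P, Q⁆ = ⊥)
    {D X Y : Subgroup G} (hD₀ : D ∈ C) (hX : X ∈ C) (hY : Y ∈ C) (hXD : X ≤ D) (hYD : Y ≤ D)
    (hXY : ⁅X, Y⁆ = ⊥) :
    ∃ B ∈ C, ∃ M₁ ∈ C, ∃ M₂ ∈ C, ∃ M₃ ∈ C, IsCommutingTripleIn B M₁ M₂ M₃ := by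
  obtain ⟨v, -, hvD⟩ := hsemi D hD₀ X hX
  have hD'D : conjS v D ≤ D := hvD.trans hXD
  have hDD' : ¬ D ≤ conjS v D := fun h =>
    hA.not_le_of_commutator_eq_bot hY hXY (hYD.trans (h.trans hvD))
  obtain ⟨u, -, huD⟩ := hsemi D hD₀ P hP
  rw [conjS_le_iff] at huD
  have hZP : ⁅conjS u⁻¹ Q, conjS u⁻¹ P⁆ = ⊥ := by
    rw [Subgroup.commutator_comm]; exact commutator_conjS_eq_bot _ hPQ
  obtain ⟨B, hB, hZD'B⟩ := hD _ (hinv _ Q hQ) _ (hinv v D hD₀) _ (hinv _ P hP) hZP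
    fun h => hDD' (huD.trans h)
  have hD'B : conjS v D ≤ B := le_sup_right.trans hZD'B
  have hZD' : ⁅conjS u⁻¹ Q, conjS v D⁆ = ⊥ := commutator_eq_bot_of_le hZP le_rfl (hD'D.trans huD)
  refine ⟨B, hB, _, hinv v X hX, _, hinv v Y hY, _, hinv _ Q hQ,
    (conjS_le_conjS_iff.mpr hXD).trans hD'B, (conjS_le_conjS_iff.mpr hYD).trans hD'B,
    le_sup_left.trans hZD'B, commutator_conjS_eq_bot v hXY, ?_, ?_⟩
  · rw [Subgroup.commutator_comm]
    exact commutator_eq_bot_of_le hZD' le_rfl (conjS_le_conjS_iff.mpr hXD)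
  · rw [Subgroup.commutator_comm]
    exact commutator_eq_bot_of_le hZD' le_rfl (conjS_le_conjS_iff.mpr hYD)

lemma exists_isCommutingTripleIn_conjS (hinv : ConjInvariant C) {H : Subgroup G}
    (hsemi : CondC C H) {B M₁ M₂ M₃ : Subgroup G} (hB : B ∈ C) (hM₁ : M₁ ∈ C) (hM₂ : M₂ ∈ C)
    (hM₃ : M₃ ∈ C) (hBM : IsCommutingTripleIn B M₁ M₂ M₃) {A : Subgroup G} (hA : A ∈ C) :
    ∃ B' ∈ C, ∃ t ∈ H, ∃ s ∈ H, IsCommutingTripleIn B' A (conjS t A) (conjS s A) := by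
  obtain ⟨g, -, hg⟩ := hsemi A hA M₁ hM₁
  obtain ⟨t, ht, htA⟩ := hsemi A hA _ (hinv g⁻¹ M₂ hM₂)
  obtain ⟨s, hs, hsA⟩ := hsemi A hA _ (hinv g⁻¹ M₃ hM₃)
  exact ⟨_, hinv g⁻¹ B hB, t, ht, s, hs, (hBM.conjS g⁻¹).mono (conjS_le_iff.mp hg) htA hsA⟩

end Family

lemma commutatorElement_mul_mul {a b α γ : G} (hαb : Commute α b) (hαγ : Commute α γ)
    (hγa : Commute γ a) : ⁅a * α, b * γ⁆ = ⁅a, b⁆ := by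
  calc ⁅a * α, b * γ⁆ = a * (α * (b * γ) * α⁻¹) * a⁻¹ * (b * γ)⁻¹ := by group
    _ = a * b * (γ * a⁻¹) * (b * γ)⁻¹ := by rw [(hαb.mul_right hαγ).mul_inv_cancel]; group
    _ = ⁅a, b⁆ := by rw [hγa.inv_right.eq]; group

lemma commutator_le_commutator_inf {A B H : Subgroup G} (hN : H.Normal) {t s : G} (ht : t ∈ H)
    (hs : s ∈ H) (h : IsCommutingTripleIn B A (conjS t A) (conjS s A)) :
    ⁅A, A⁆ ≤ ⁅B ⊓ H, B ⊓ H⁆ := by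
  obtain ⟨hAB, htB, hsB, hAt, hAs, hts⟩ := h
  rw [Subgroup.commutator_le]
  intro a ha b hb
  have hα : t * a⁻¹ * t⁻¹ ∈ conjS t A := conj_mem_conjS t (A.inv_mem ha)
  have hγ : s * b⁻¹ * s⁻¹ ∈ conjS s A := conj_mem_conjS s (A.inv_mem hb)
  have hx_eq : ⁅a, t⁆ = a * (t * a⁻¹ * t⁻¹) := by rw [commutatorElement_def]; group
  have hy_eq : ⁅b, s⁆ = b * (s * b⁻¹ * s⁻¹) := by rw [commutatorElement_def]; group
  have hx : ⁅a, t⁆ ∈ B ⊓ H :=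
    ⟨hx_eq ▸ B.mul_mem (hAB ha) (htB hα), H.mul_mem (hN.conj_mem t ht a) (H.inv_mem ht)⟩
  have hy : ⁅b, s⁆ ∈ B ⊓ H :=
    ⟨hy_eq ▸ B.mul_mem (hAB hb) (hsB hγ), H.mul_mem (hN.conj_mem s hs b) (H.inv_mem hs)⟩
  have hxy : ⁅⁅a, t⁆, ⁅b, s⁆⁆ = ⁅a, b⁆ := by
    rw [hx_eq, hy_eq]
    exact commutatorElement_mul_mul (commute_of_commutator_eq_bot hAt hb hα).symm
      (commute_of_commutator_eq_bot hts hα hγ) (commute_of_commutator_eq_bot hAs ha hγ).symm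
  rw [← hxy]
  exact Subgroup.commutator_mem_commutator hx hy

lemma commutator_inf_ne_bot_of_conjS_le {A B H : Subgroup G} (hN : H.Normal) {h : G}
    (hBA : conjS h B ≤ A) (hB : ⁅B ⊓ H, B ⊓ H⁆ ≠ ⊥) : ⁅A ⊓ H, A ⊓ H⁆ ≠ ⊥ := by
  have hle : conjS h (B ⊓ H) ≤ A ⊓ H := by
    rw [conjS_inf, conjS_eq_self_of_normal h hN]
    exact inf_le_inf_right H hBA
  refine ne_bot_of_le_ne_bot ?_ (Subgroup.commutator_mono hle hle)
  rwa [commutator_conjS, Ne, conjS_eq_bot_iff]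

/-- Lemma (leafless, part (iv)): if 𝒞 is a joinable compression family for `G` and `H` is
a normal subgroup of `G` that is semi-transitive on 𝒞, then every `A ∈ 𝒞` is contained in
some `B ∈ 𝒞` with `D(A) ≤ D(B ∩ H)`; consequently `A ∩ H` is non-abelian for every
`A ∈ 𝒞`. -/
theorem derived_le_derived_inf [Nontrivial G] (C : Set (Subgroup G))
    (hC : IsJoinableCompressionFamily C (⊤ : Subgroup G))
    (H : Subgroup G) (hN : H.Normal) (hsemi : CondC C H) :
    (∀ A ∈ C, ∃ B ∈ C, A ≤ B ∧ (⁅A, A⁆ : Subgroup G) ≤ ⁅B ⊓ H, B ⊓ H⁆) ∧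
      ∀ A ∈ C, ∃ a ∈ A ⊓ H, ∃ b ∈ A ⊓ H, a * b ≠ b * a := by
  obtain ⟨⟨hinv, hA, hB, -⟩, hD⟩ := hC
  obtain ⟨P, hP, Q, hQ, hPQ⟩ := exists_commuting_pair hinv hB
  obtain ⟨D, hD₀, X, hX, Y, hY, hXD, hYD, hXY⟩ :=
    exists_commuting_pair_le hinv hA hB hsemi hD hP hQ hPQ
  obtain ⟨B, hB₀, M₁, hM₁, M₂, hM₂, M₃, hM₃, hBM⟩ :=
    exists_isCommutingTripleIn hinv hA hsemi hD hP hQ hPQ hD₀ hX hY hXD hYD hXY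
  have hderived : ∀ A ∈ C, ∃ B ∈ C, A ≤ B ∧ ⁅A, A⁆ ≤ ⁅B ⊓ H, B ⊓ H⁆ := fun A hA₀ => by
    obtain ⟨B', hB', t, ht, s, hs, h⟩ :=
      exists_isCommutingTripleIn_conjS hinv hsemi hB₀ hM₁ hM₂ hM₃ hBM hA₀
    exact ⟨B', hB', h.1, commutator_le_commutator_inf hN ht hs h⟩
  refine ⟨hderived, fun A hA₀ => commutator_self_ne_bot_iff.mp ?_⟩
  obtain ⟨B', hB', -, hle⟩ := hderived A hA₀
  obtain ⟨g, -, hgB'⟩ := hsemi B' hB' A hA₀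
  exact commutator_inf_ne_bot_of_conjS_le hN hgB'
    (ne_bot_of_le_ne_bot (commutator_self_ne_bot_iff.mpr (hA A hA₀)) hle)

end Paper
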